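/- Let Q be a real 3×3 special orthogonal matrix, Ψ = (1/2)tr(I − Q), and e = (1/2)(Q − Qᵀ)∨ ∈ ℝ³. Then (1/2)‖e‖² ≤ Ψ, and for any real ψ with Ψ ≤ ψ < 2 one has Ψ ≤ ‖e‖²/(2 − ψ). That is, the attitude configuration error function is quadratic with respect to the attitude error vector on the sublevel set {Ψ < ψ < 2}. -/
import Mathlib


open Matrix BigOperators

/-- The Euclidean inner product on ℝ³. -/
noncomputable def dot3 (a b : Fin 3 → ℝ) : ℝ := ∑ i, a i * b i

/-- The vee map: inverse of the hat map, `S∨ = (S₃₂, S₁₃, S₂₁)`. -/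
def vee (S : Matrix (Fin 3) (Fin 3) ℝ) : Fin 3 → ℝ := ![S 2 1, S 0 2, S 1 0]

set_option maxHeartbeats 1600000 in
/-- For `Q ∈ SO(3)`, `Ψ = (1/2)tr(I − Q)` and `e = (1/2)(Q − Qᵀ)∨`,
one has `(1/2)‖e‖² ≤ Ψ`, and `Ψ ≤ ‖e‖²/(2 − ψ)` whenever `Ψ ≤ ψ < 2`. -/
theorem attitude_error_quadratic_bounds (Q : Matrix (Fin 3) (Fin 3) ℝ)
    (hQ : Qᵀ * Q = 1) (hdet : Q.det = 1)
    (Ψ : ℝ) (hΨ : Ψ = (1 / 2) * Matrix.trace ((1 : Matrix (Fin 3) (Fin 3) ℝ) - Q))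
    (e : Fin 3 → ℝ) (he : e = vee ((1 / 2 : ℝ) • (Q - Qᵀ))) :
    (1 / 2) * dot3 e e ≤ Ψ ∧
    ∀ ψ : ℝ, Ψ ≤ ψ → ψ < 2 → Ψ ≤ dot3 e e / (2 - ψ) := by
  have hQQ : Q * Qᵀ = 1 := mul_eq_one_comm.mp hQ
  -- adjugate of Q equals its transpose
  have hmul : Q * Q.adjugate = 1 := by
    have := Matrix.mul_adjugate Q
    rwa [hdet, one_smul] at this
  have hadj : Q.adjugate = Qᵀ := by
    calc Q.adjugate = (Qᵀ * Q) * Q.adjugate := by rw [hQ, one_mul]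
      _ = Qᵀ * (Q * Q.adjugate) := by rw [Matrix.mul_assoc]
      _ = Qᵀ := by rw [hmul, mul_one]
  have d0 := congrFun (congrFun hadj 0) 0
  have d1 := congrFun (congrFun hadj 1) 1
  have d2 := congrFun (congrFun hadj 2) 2
  simp [Matrix.adjugate_fin_three, Matrix.transpose_apply] at d0 d1 d2
  have h00 := congrFun (congrFun hQQ 0) 0
  have h11 := congrFun (congrFun hQQ 1) 1
  have h22 := congrFun (congrFun hQQ 2) 2
  have g00 := congrFun (congrFun hQ 0) 0
  have g11 := congrFun (congrFun hQ 1) 1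
  have g22 := congrFun (congrFun hQ 2) 2
  simp [Matrix.mul_apply, Fin.sum_univ_three, Matrix.one_apply, Matrix.transpose_apply] at h00 h11 h22 g00 g11 g22
  have hΨ' : Ψ = (3 - (Q 0 0 + Q 1 1 + Q 2 2)) / 2 := by
    rw [hΨ]
    simp [Matrix.trace, Matrix.diag, Fin.sum_univ_three]
    ring
  have hee : dot3 e e = Ψ * (2 - Ψ) := by
    rw [he, hΨ']
    simp only [dot3, vee, Fin.sum_univ_three, Matrix.smul_apply, Matrix.sub_apply,
      Matrix.transpose_apply, Matrix.cons_val_zero, Matrix.cons_val_one, Matrix.head_cons,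
      Matrix.cons_val_two, Matrix.tail_cons, smul_eq_mul]
    linear_combination (h00 + h11 + h22 + 2*d0 + 2*d1 + 2*d2) / 4
  have hΨ0 : 0 ≤ Ψ := by
    rw [hΨ']
    nlinarith [g00, g11, g22, sq_nonneg (Q 0 0 - 1), sq_nonneg (Q 1 1 - 1),
      sq_nonneg (Q 2 2 - 1), sq_nonneg (Q 1 0), sq_nonneg (Q 2 0), sq_nonneg (Q 0 1),
      sq_nonneg (Q 2 1), sq_nonneg (Q 0 2), sq_nonneg (Q 1 2)]
  refine ⟨by nlinarith [hee, sq_nonneg Ψ], ?_⟩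
  intro ψ h1 h2
  rw [hee, le_div_iff₀ (by linarith)]
  nlinarith
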